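/- arXiv:2001.02373 — 7 statements merged into one kernel-verified Lean document; each statement's English description precedes it below -/
import Mathlib

section
/- Let $T$ be a finite tree (partially ordered set in which the set of elements above any given element is totally ordered) and let $I$ be the Hardy operator $If(\alpha) = \sum_{\alpha' \geq \alpha} f(\alpha')$. Then for any nonnegative functions $f, g : T \to [0,\infty)$ and every $\alpha \in T$, one has $(If)(\alpha) \cdot (Ig)(\alpha) \leq I(If \cdot g + f \cdot Ig)(\alpha)$. -/
open Finset
open scoped Classical

/-- A tree order: the set of elements above any given element is totally ordered. -/
def IsTreeOrder (T : Type*) [PartialOrder T] : Prop :=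
  ∀ ω a b : T, ω ≤ a → ω ≤ b → a ≤ b ∨ b ≤ a

/-- The Hardy operator `I f α = ∑_{α' ≥ α} f α'`. -/
noncomputable def hI {T : Type*} [Fintype T] [PartialOrder T] (f : T → ℝ) (a : T) : ℝ :=
  ∑ b, if a ≤ b then f b else 0

/-- The adjoint Hardy operator `I* f β = ∑_{α ≤ β} f α`. -/
noncomputable def hIstar {T : Type*} [Fintype T] [PartialOrder T] (f : T → ℝ) (b : T) : ℝ :=
  ∑ a, if a ≤ b then f a else 0

/-- `b` is a child of `β`: a maximal element of the set of elements strictly below `β`. -/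
def IsChild {T : Type*} [PartialOrder T] (b β : T) : Prop :=
  b < β ∧ ∀ c, b < c → c < β → False

/-- The difference operator `Δ f β = f β - ∑_{β' ∈ ch β} f β'`. -/
noncomputable def hDelta {T : Type*} [Fintype T] [PartialOrder T] (f : T → ℝ) (β : T) : ℝ :=
  f β - ∑ b, if IsChild b β then f b else 0

/-- A superadditive function on a tree: `f β ≥ ∑_{β' ∈ ch β} f β'` for all `β`. -/
def Superadd {T : Type*} [Fintype T] [PartialOrder T] (f : T → ℝ) : Prop :=
  ∀ β : T, (∑ b, if IsChild b β then f b else 0) ≤ f β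

/-
On a tree the inequality is an identity with a nonnegative defect:
`I(If · g + f · Ig)(α) = If(α) · Ig(α) + I(f g)(α)`. Expand both sides as sums of `f a · g b`
over pairs `(a, b)`. The product `If(α) · Ig(α)` runs over the pairs with `α ≤ a` and `α ≤ b`,
while the left-hand side runs over the pairs with `α ≤ b ≤ a` or `α ≤ a ≤ b`. Two elements
above `α` are comparable, so these are the same pairs, except that the diagonal `a = b` is
counted twice.
-/

lemma IsTreeOrder.ite_add_ite_eq {T : Type*} [PartialOrder T] (htree : IsTreeOrder T)
    (α a b : T) (x : ℝ) :
    ((if α ≤ b ∧ b ≤ a then x else 0) + if α ≤ a ∧ a ≤ b then x else 0) =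
      (if α ≤ a ∧ α ≤ b then x else 0) + if α ≤ a ∧ a = b then x else 0 := by
  have hcomparable := htree α a b
  split_ifs <;> grind

section Hardy

variable {T : Type*} [Fintype T] [PartialOrder T]

lemma hI_nonneg {f : T → ℝ} (hf : ∀ a, 0 ≤ f a) (a : T) : 0 ≤ hI f a :=
  sum_nonneg fun b _ => ite_nonneg (hf b) le_rfl

lemma hI_add (f g : T → ℝ) (α : T) :
    hI (fun a => f a + g a) α = hI f α + hI g α := by
  simp only [hI, ← sum_add_distrib, ite_add_zero]

lemma mul_hI_eq_sum (f g : T → ℝ) (α : T) :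
    hI f α * hI g α = ∑ a, ∑ b, if α ≤ a ∧ α ≤ b then f a * g b else 0 := by
  simp only [hI, sum_mul_sum, ite_zero_mul_ite_zero]

lemma hI_hI_mul_eq_sum (f g : T → ℝ) (α : T) :
    hI (fun c => hI f c * g c) α = ∑ a, ∑ b, if α ≤ b ∧ b ≤ a then f a * g b else 0 := by
  rw [hI, sum_comm]
  refine sum_congr rfl fun b _ => ?_
  simp only [hI, sum_mul, ite_zero_mul, ite_and, sum_ite_irrel, sum_const_zero]

lemma hI_mul_hI_eq_sum (f g : T → ℝ) (α : T) :
    hI (fun c => f c * hI g c) α = ∑ a, ∑ b, if α ≤ a ∧ a ≤ b then f a * g b else 0 := by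
  refine sum_congr rfl fun a _ => ?_
  simp only [hI, mul_sum, mul_ite, mul_zero, ite_and, sum_ite_irrel, sum_const_zero]

lemma hI_mul_eq_sum_diag (f g : T → ℝ) (α : T) :
    hI (fun c => f c * g c) α = ∑ a, ∑ b, if α ≤ a ∧ a = b then f a * g b else 0 := by
  refine sum_congr rfl fun a _ => ?_
  simp only [ite_and, sum_ite_irrel, sum_const_zero, sum_ite_eq, mem_univ, if_true]

theorem hI_leibniz (htree : IsTreeOrder T) (f g : T → ℝ) (α : T) :
    hI (fun a => hI f a * g a + f a * hI g a) α =
      hI f α * hI g α + hI (fun a => f a * g a) α := by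
  rw [hI_add, hI_hI_mul_eq_sum, hI_mul_hI_eq_sum, mul_hI_eq_sum, hI_mul_eq_sum_diag,
    ← sum_add_distrib, ← sum_add_distrib]
  refine sum_congr rfl fun a _ => ?_
  rw [← sum_add_distrib, ← sum_add_distrib]
  exact sum_congr rfl fun b _ => htree.ite_add_ite_eq α a b _

end Hardy

theorem stmt0 {T : Type*} [Fintype T] [PartialOrder T] (htree : IsTreeOrder T)
    (f g : T → ℝ) (hf : ∀ a, 0 ≤ f a) (hg : ∀ a, 0 ≤ g a) (α : T) :
    hI f α * hI g α ≤ hI (fun a => hI f a * g a + f a * hI g a) α := by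
  rw [hI_leibniz htree]
  exact le_add_of_nonneg_right (hI_nonneg (fun a => mul_nonneg (hf a) (hg a)) α)
end

section
/- Let $T$ be a finite tree and let $f, g : T \to [0,\infty)$ with $f$ superadditive (i.e. $f(\beta) \geq \sum_{\beta' \in \mathrm{ch}(\beta)} f(\beta')$ for all $\beta$). Then for every $\beta \in T$, $I^*(fg)(\beta) \leq I^*(\Delta f \cdot Ig)(\beta)$. -/
open Finset
open scoped Classical

/-! Every `b < γ` has a unique parent below `γ`, so `I*` telescopes against `Δ`: `I*(Δf)(γ) = f γ`.
Exchanging the order of summation, `I*(Δf · Ig)(β) = ∑_c g c · ∑_{a ≤ β, a ≤ c} Δf a`. For `c ≤ β`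
the inner sum is `I*(Δf)(c) = f c`, and for every other `c` it is nonnegative by superadditivity. -/

section

variable {T : Type*} [PartialOrder T]

theorem isChild_iff_covBy {b β : T} : IsChild b β ↔ b ⋖ β := Iff.rfl

theorem IsTreeOrder.eq_of_covBy (htree : IsTreeOrder T) {b α α' : T} (h : b ⋖ α) (h' : b ⋖ α') :
    α = α' := by
  rcases htree b α α' h.le h'.le with hle | hle
  · exact (h'.wcovBy.eq_or_eq h.le hle).resolve_left h.lt.ne'
  · exact ((h.wcovBy.eq_or_eq h'.le hle).resolve_left h'.lt.ne').symm

variable [Fintype T]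

theorem IsTreeOrder.sum_ite_covBy_le {M : Type*} [AddCommMonoid M] (htree : IsTreeOrder T)
    (x : M) (b γ : T) : (∑ a, if b ⋖ a ∧ a ≤ γ then x else 0) = if b < γ then x else 0 := by
  split_ifs with hb
  · obtain ⟨α, hbα, hαγ⟩ := exists_covBy_le_of_lt hb
    rw [Finset.sum_eq_single α (fun a _ ha => if_neg fun h => ha (htree.eq_of_covBy h.1 hbα))
      (by simp), if_pos ⟨hbα, hαγ⟩]
  · exact Finset.sum_eq_zero fun a _ => if_neg fun h => hb (h.1.lt.trans_le h.2)

theorem hIstar_eq_add_sum_lt (f : T → ℝ) (γ : T) :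
    hIstar f γ = f γ + ∑ b, if b < γ then f b else 0 := by
  have split (a : T) : (if a ≤ γ then f a else 0) =
      (if a = γ then f a else 0) + if a < γ then f a else 0 := by
    by_cases h : a = γ
    · simp [h]
    · simp [h, le_iff_eq_or_lt]
  simp only [hIstar, split, Finset.sum_add_distrib, Finset.sum_ite_eq', Finset.mem_univ, if_true]

theorem IsTreeOrder.hIstar_hDelta (htree : IsTreeOrder T) (f : T → ℝ) (γ : T) :
    hIstar (hDelta f) γ = f γ := by
  have children (a : T) : (if a ≤ γ then hDelta f a else 0) =
      (if a ≤ γ then f a else 0) - ∑ b, if b ⋖ a ∧ a ≤ γ then f b else 0 := by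
    by_cases h : a ≤ γ <;> simp [hDelta, h, isChild_iff_covBy]
  have hf := hIstar_eq_add_sum_lt f γ
  simp only [hIstar, children, Finset.sum_sub_distrib] at hf ⊢
  rw [Finset.sum_comm]
  simp only [htree.sum_ite_covBy_le]
  linarith

theorem hIstar_mul_hI (h g : T → ℝ) (β : T) :
    hIstar (fun a => h a * hI g a) β = ∑ c, g c * ∑ a, if a ≤ β ∧ a ≤ c then h a else 0 := by
  have expand (a : T) : (if a ≤ β then h a * hI g a else 0) =
      ∑ c, if a ≤ β ∧ a ≤ c then h a * g c else 0 := by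
    by_cases ha : a ≤ β <;> simp [ha, hI, Finset.mul_sum]
  simp only [hIstar, expand]
  rw [Finset.sum_comm]
  simp only [Finset.mul_sum, mul_ite, mul_zero, mul_comm]

theorem hDelta_nonneg {f : T → ℝ} (hsup : Superadd f) (β : T) : 0 ≤ hDelta f β :=
  sub_nonneg.mpr (hsup β)

end

theorem stmt3_general {T : Type*} [Fintype T] [PartialOrder T] (htree : IsTreeOrder T)
    (f g : T → ℝ) (hg : ∀ a, 0 ≤ g a)
    (hsup : Superadd f) (β : T) :
    hIstar (fun a => f a * g a) β ≤ hIstar (fun a => hDelta f a * hI g a) β := by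
  rw [hIstar_mul_hI, hIstar]
  refine Finset.sum_le_sum fun c _ => ?_
  by_cases hc : c ≤ β
  · have below (a : T) : a ≤ β ∧ a ≤ c ↔ a ≤ c := and_iff_right_of_imp (·.trans hc)
    simp only [below, if_pos hc]
    rw [show (∑ a, if a ≤ c then hDelta f a else 0) = f c from htree.hIstar_hDelta f c, mul_comm]
  · rw [if_neg hc]
    exact mul_nonneg (hg c) (Finset.sum_nonneg fun a _ => ite_nonneg (hDelta_nonneg hsup a) le_rfl)

theorem stmt3 {T : Type*} [Fintype T] [PartialOrder T] (htree : IsTreeOrder T)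
    (f g : T → ℝ) (hf : ∀ a, 0 ≤ f a) (hg : ∀ a, 0 ≤ g a)
    (hsup : Superadd f) (β : T) :
    hIstar (fun a => f a * g a) β ≤ hIstar (fun a => hDelta f a * hI g a) β :=
  stmt3_general htree f g hg hsup β
end

section
/- Let $T^2 = T_1 \times T_2$ be a product of two finite trees with the product order, and let $\mathbb{I} = I_1 I_2$ be the bi-parameter Hardy operator $\mathbb{I} f(\alpha) = \sum_{\alpha' \geq \alpha} f(\alpha')$. Then for any nonnegative functions $f, g : T^2 \to [0,\infty)$, pointwise $(\mathbb{I} f)(\mathbb{I} g) \leq \mathbb{I}\big( \mathbb{I} f \cdot g + I_1 f \cdot I_2 g + I_2 f \cdot I_1 g + f \cdot \mathbb{I} g \big)$, where $I_1, I_2$ are the Hardy operators acting in the first and second coordinate respectively. -/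
open Finset
open scoped Classical

/-- The Hardy operator acting in the first coordinate of a bi-tree. -/
noncomputable def hI1 {T1 T2 : Type*} [Fintype T1] [PartialOrder T1]
    (f : T1 × T2 → ℝ) (a : T1 × T2) : ℝ :=
  ∑ b : T1, if a.1 ≤ b then f (b, a.2) else 0

/-- The Hardy operator acting in the second coordinate of a bi-tree. -/
noncomputable def hI2 {T1 T2 : Type*} [Fintype T2] [PartialOrder T2]
    (f : T1 × T2 → ℝ) (a : T1 × T2) : ℝ :=
  ∑ b : T2, if a.2 ≤ b then f (a.1, b) else 0

/-- Superadditivity in the first parameter separately. -/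
def Superadd1 {T1 T2 : Type*} [Fintype T1] [PartialOrder T1]
    (f : T1 × T2 → ℝ) : Prop :=
  ∀ (β : T1) (a2 : T2), (∑ b, if IsChild b β then f (b, a2) else 0) ≤ f (β, a2)

/-- Superadditivity in the second parameter separately. -/
def Superadd2 {T1 T2 : Type*} [Fintype T2] [PartialOrder T2]
    (f : T1 × T2 → ℝ) : Prop :=
  ∀ (a1 : T1) (β : T2), (∑ b, if IsChild b β then f (a1, b) else 0) ≤ f (a1, β)

/-! Both sides are sums of `f β * g γ` over pairs `(β, γ)`: on the left over all pairs above `α`,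
on the right, after reindexing, over the pairs for which one of the four corners `γ`, `(γ₁, β₂)`,
`(β₁, γ₂)`, `β` of the rectangle spanned by `β` and `γ` lies above `α` and below the opposite
corner. In a tree the up-set of `αᵢ` is a chain, so `βᵢ` and `γᵢ` are comparable and the
coordinatewise minimum of `β` and `γ` is one of these corners; hence every pair on the left is
counted on the right, and all terms are nonnegative. -/

section Tree

variable {T : Type*} [Fintype T] [PartialOrder T]

lemma hI_mul_hI (f g : T → ℝ) (α : T) :
    hI f α * hI g α = ∑ p : T × T, if α ≤ p.1 ∧ α ≤ p.2 then f p.1 * g p.2 else 0 := by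
  simp only [hI, Fintype.sum_mul_sum, ite_zero_mul_ite_zero]
  rw [Fintype.sum_prod_type]

lemma hI_hI_eq_sum (F : T → T → ℝ) (α : T) :
    hI (fun a => hI (F a) a) α = ∑ p : T × T, if α ≤ p.1 ∧ p.1 ≤ p.2 then F p.1 p.2 else 0 := by
  rw [hI, Fintype.sum_prod_type]
  refine sum_congr rfl fun a _ => ?_
  by_cases h : α ≤ a <;> simp [h, hI]

lemma hI_hI_mul_left (f g : T → ℝ) (α : T) :
    hI (fun a => hI f a * g a) α =
      ∑ p : T × T, if α ≤ p.2 ∧ p.2 ≤ p.1 then f p.1 * g p.2 else 0 := by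
  have hmul : ∀ a, hI f a * g a = hI (fun b => f b * g a) a := fun a => by
    simp only [hI, sum_mul, ite_mul, zero_mul]
  simp only [hmul, hI_hI_eq_sum]
  exact Fintype.sum_equiv (Equiv.prodComm T T) _ _ fun _ => rfl

lemma hI_hI_mul_right (f g : T → ℝ) (α : T) :
    hI (fun a => f a * hI g a) α =
      ∑ p : T × T, if α ≤ p.1 ∧ p.1 ≤ p.2 then f p.1 * g p.2 else 0 := by
  have hmul : ∀ a, f a * hI g a = hI (fun b => f a * g b) a := fun a => by
    simp only [hI, mul_sum, mul_ite, mul_zero]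
  simp only [hmul, hI_hI_eq_sum]

end Tree

section BiTree

variable {T1 T2 : Type*} [PartialOrder T1] [PartialOrder T2]

lemma le_corner_cases (h1 : IsTreeOrder T1) (h2 : IsTreeOrder T2) {α β γ : T1 × T2}
    (hβ : α ≤ β) (hγ : α ≤ γ) :
    (α ≤ γ ∧ γ ≤ β) ∨ (α ≤ (γ.1, β.2) ∧ (γ.1, β.2) ≤ (β.1, γ.2)) ∨
      (α ≤ (β.1, γ.2) ∧ (β.1, γ.2) ≤ (γ.1, β.2)) ∨ (α ≤ β ∧ β ≤ γ) := by
  obtain ⟨hβ1, hβ2⟩ := hβ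
  obtain ⟨hγ1, hγ2⟩ := hγ
  rcases h1 _ _ _ hγ1 hβ1 with c1 | c1 <;> rcases h2 _ _ _ hγ2 hβ2 with c2 | c2
  · exact .inl ⟨⟨hγ1, hγ2⟩, c1, c2⟩
  · exact .inr <| .inl ⟨⟨hγ1, hβ2⟩, c1, c2⟩
  · exact .inr <| .inr <| .inl ⟨⟨hβ1, hγ2⟩, c1, c2⟩
  · exact .inr <| .inr <| .inr ⟨⟨hβ1, hβ2⟩, c1, c2⟩

variable [Fintype T1] [Fintype T2]

lemma hI1_mul_hI2 (f g : T1 × T2 → ℝ) (a : T1 × T2) :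
    hI1 f a * hI2 g a = hI (fun b => f (b.1, a.2) * g (a.1, b.2)) a := by
  simp only [hI1, hI2, hI, Fintype.sum_mul_sum, ite_zero_mul_ite_zero, Fintype.sum_prod_type,
    Prod.le_def]

lemma hI_hI1_mul_hI2 (f g : T1 × T2 → ℝ) (α : T1 × T2) :
    hI (fun a => hI1 f a * hI2 g a) α = ∑ p : (T1 × T2) × (T1 × T2),
      if α ≤ (p.2.1, p.1.2) ∧ (p.2.1, p.1.2) ≤ (p.1.1, p.2.2) then f p.1 * g p.2 else 0 := by
  simp only [hI1_mul_hI2, hI_hI_eq_sum]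
  exact Fintype.sum_equiv (Function.Involutive.toPerm (fun p => ((p.2.1, p.1.2), (p.1.1, p.2.2)))
    fun _ => rfl) _ _ fun ⟨⟨_, _⟩, _, _⟩ => by congr 1

lemma hI_hI2_mul_hI1 (f g : T1 × T2 → ℝ) (α : T1 × T2) :
    hI (fun a => hI2 f a * hI1 g a) α = ∑ p : (T1 × T2) × (T1 × T2),
      if α ≤ (p.1.1, p.2.2) ∧ (p.1.1, p.2.2) ≤ (p.2.1, p.1.2) then f p.1 * g p.2 else 0 := by
  simp only [mul_comm (hI2 f _), hI1_mul_hI2, hI_hI_eq_sum]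
  exact Fintype.sum_equiv (Function.Involutive.toPerm (fun p => ((p.1.1, p.2.2), (p.2.1, p.1.2)))
    fun _ => rfl) _ _ fun ⟨⟨_, _⟩, _, _⟩ => by rw [mul_comm]; congr 1

end BiTree

theorem stmt4 {T1 T2 : Type*} [Fintype T1] [PartialOrder T1] [Fintype T2] [PartialOrder T2]
    (h1 : IsTreeOrder T1) (h2 : IsTreeOrder T2)
    (f g : T1 × T2 → ℝ) (hf : ∀ a, 0 ≤ f a) (hg : ∀ a, 0 ≤ g a) (α : T1 × T2) :
    hI f α * hI g α ≤
      hI (fun a => hI f a * g a + hI1 f a * hI2 g a + hI2 f a * hI1 g a + f a * hI g a) α := by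
  rw [hI_add, hI_add, hI_add, hI_mul_hI, hI_hI_mul_left, hI_hI1_mul_hI2, hI_hI2_mul_hI1,
    hI_hI_mul_right, ← sum_add_distrib, ← sum_add_distrib, ← sum_add_distrib]
  refine sum_le_sum fun p _ => ?_
  have hfg := mul_nonneg (hf p.1) (hg p.2)
  split_ifs <;> grind [le_corner_cases h1 h2]
end

section
/- Let $T^3 = T_1 \times T_2 \times T_3$ be a product of three finite trees and $\mathbf{I} = I_1 I_2 I_3$ the tri-parameter Hardy operator. Then for any nonnegative $f, g : T^3 \to [0,\infty)$, pointwise $(\mathbf{I} f)(\mathbf{I} g) \leq \mathbf{I}\Big( \sum_{A \subseteq \{1,2,3\}} I_A f \cdot I_{A^c} g \Big)$, where $I_A = \prod_{i \in A} I_i$ (with $I_\emptyset$ the identity). -/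
open Finset
open scoped Classical

/-- The Hardy operator acting in the first coordinate of a tri-tree. -/
noncomputable def k1 {T1 T2 T3 : Type*} [Fintype T1] [PartialOrder T1]
    (f : T1 × T2 × T3 → ℝ) (a : T1 × T2 × T3) : ℝ :=
  ∑ b : T1, if a.1 ≤ b then f (b, a.2.1, a.2.2) else 0

/-- The Hardy operator acting in the second coordinate of a tri-tree. -/
noncomputable def k2 {T1 T2 T3 : Type*} [Fintype T2] [PartialOrder T2]
    (f : T1 × T2 × T3 → ℝ) (a : T1 × T2 × T3) : ℝ :=
  ∑ b : T2, if a.2.1 ≤ b then f (a.1, b, a.2.2) else 0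

/-- The Hardy operator acting in the third coordinate of a tri-tree. -/
noncomputable def k3 {T1 T2 T3 : Type*} [Fintype T3] [PartialOrder T3]
    (f : T1 × T2 × T3 → ℝ) (a : T1 × T2 × T3) : ℝ :=
  ∑ b : T3, if a.2.2 ≤ b then f (a.1, a.2.1, b) else 0

/-- Superadditivity in the first parameter separately. -/
def SuperaddT1 {T1 T2 T3 : Type*} [Fintype T1] [PartialOrder T1]
    (f : T1 × T2 × T3 → ℝ) : Prop :=
  ∀ (β : T1) (a2 : T2) (a3 : T3),
    (∑ b, if IsChild b β then f (b, a2, a3) else 0) ≤ f (β, a2, a3)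

/-- Superadditivity in the second parameter separately. -/
def SuperaddT2 {T1 T2 T3 : Type*} [Fintype T2] [PartialOrder T2]
    (f : T1 × T2 × T3 → ℝ) : Prop :=
  ∀ (a1 : T1) (β : T2) (a3 : T3),
    (∑ b, if IsChild b β then f (a1, b, a3) else 0) ≤ f (a1, β, a3)

/-- Superadditivity in the third parameter separately. -/
def SuperaddT3 {T1 T2 T3 : Type*} [Fintype T3] [PartialOrder T3]
    (f : T1 × T2 × T3 → ℝ) : Prop :=
  ∀ (a1 : T1) (a2 : T2) (β : T3),
    (∑ b, if IsChild b β then f (a1, a2, b) else 0) ≤ f (a1, a2, β)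

/-!
On a tree, any two points above `α` are comparable, so the double sum
`∑_{β, γ ≥ α} u β * v γ = I u α * I v α` is covered by its parts with `β ≤ γ` and with
`γ ≤ β`, which gives the one-parameter rule `I u * I v ≤ I (u * I v + I u * v)` for
nonnegative `u, v`. The coordinate operators `I₁, I₂, I₃` each obey this rule, are additive,
monotone and commute, and `𝐈 = I₁ I₂ I₃`. Applying the rule once in each coordinate splits
`𝐈 f * 𝐈 g` into the eight terms `I_A f * I_{Aᶜ} g`, each under the full operator `𝐈`.
-/

structure IsHardyType {X : Type*} (K : (X → ℝ) → X → ℝ) : Prop where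
  map_add : ∀ u v, K (u + v) = K u + K v
  mono : Monotone K
  mul_le : ∀ u v, 0 ≤ u → 0 ≤ v → K u * K v ≤ K (u * K v + K u * v)

namespace IsHardyType

variable {X : Type*} {K L N : (X → ℝ) → X → ℝ}

theorem map_zero (hK : IsHardyType K) : K 0 = 0 := by
  simpa using hK.map_add 0 0

theorem nonneg (hK : IsHardyType K) {u : X → ℝ} (hu : 0 ≤ u) : 0 ≤ K u :=
  hK.map_zero ▸ hK.mono hu

theorem mul_le_comp₂ (hK : IsHardyType K) (hL : IsHardyType L) (hKL : Function.Commute K L)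
    {u v : X → ℝ} (hu : 0 ≤ u) (hv : 0 ≤ v) :
    K (L u) * K (L v) ≤ K (L (u * K (L v) + K u * L v + L u * K v + K (L u) * v)) := by
  calc K (L u) * K (L v)
      ≤ K (L u * L (K v) + L (K u) * L v) := by
        rw [← hKL u, ← hKL v]; exact hK.mul_le _ _ (hL.nonneg hu) (hL.nonneg hv)
    _ ≤ K (L (u * L (K v) + L u * K v) + L (K u * L v + L (K u) * v)) :=
        hK.mono (add_le_add (hL.mul_le _ _ hu (hK.nonneg hv)) (hL.mul_le _ _ (hK.nonneg hu) hv))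
    _ = K (L (u * K (L v) + K u * L v + L u * K v + K (L u) * v)) := by
        rw [← hL.map_add, hKL u, hKL v]
        congr 2; ring

theorem mul_le_comp₃ (hK : IsHardyType K) (hL : IsHardyType L) (hN : IsHardyType N)
    (hKL : Function.Commute K L) (hKN : Function.Commute K N) (hLN : Function.Commute L N)
    {u v : X → ℝ} (hu : 0 ≤ u) (hv : 0 ≤ v) :
    K (L (N u)) * K (L (N v)) ≤
      K (L (N (u * K (L (N v)) + K u * L (N v) + L u * K (N v) + N u * K (L v)
        + K (L u) * N v + K (N u) * L v + L (N u) * K v + K (L (N u)) * v))) := by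
  have hKLN : ∀ w, K (L (N w)) = L (N (K w)) := fun w => by rw [hKL, hKN]
  calc K (L (N u)) * K (L (N v))
      ≤ K (L (N u) * L (N (K v)) + L (N (K u)) * L (N v)) := by
        rw [← hKLN u, ← hKLN v]
        exact hK.mul_le _ _ (hL.nonneg (hN.nonneg hu)) (hL.nonneg (hN.nonneg hv))
    _ ≤ K (L (N (u * L (N (K v)) + L u * N (K v) + N u * L (K v) + L (N u) * K v))
          + L (N (K u * L (N v) + L (K u) * N v + N (K u) * L v + L (N (K u)) * v))) :=
        hK.mono (add_le_add (hL.mul_le_comp₂ hN hLN hu (hK.nonneg hv))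
          (hL.mul_le_comp₂ hN hLN (hK.nonneg hu) hv))
    _ = _ := by
        rw [← hL.map_add, ← hN.map_add, hKLN u, hKLN v, hKL u, hKL v, hKN u, hKN v]
        congr 3; ring

end IsHardyType

section Tree

variable {T : Type*} [Fintype T] [PartialOrder T]

theorem hI_mul_hI_s6 (u v : T → ℝ) (a : T) :
    hI u a * hI v a = ∑ b, ∑ c, if a ≤ b ∧ a ≤ c then u b * v c else 0 := by
  simp only [hI, sum_mul_sum, ite_zero_mul_ite_zero]

theorem hI_mul_hI_add_hI_mul (u v : T → ℝ) (a : T) :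
    hI (u * hI v + hI u * v) a = ∑ b, ∑ c,
      ((if a ≤ b ∧ b ≤ c then u b * v c else 0) + if a ≤ c ∧ c ≤ b then u b * v c else 0) := by
  have hleft : (∑ b, if a ≤ b then u b * hI v b else 0) =
      ∑ b, ∑ c, if a ≤ b ∧ b ≤ c then u b * v c else 0 := by
    simp only [hI, mul_sum, mul_ite, mul_zero, ite_sum_zero, ite_and]
  have hright : (∑ c, if a ≤ c then hI u c * v c else 0) =
      ∑ b, ∑ c, if a ≤ c ∧ c ≤ b then u b * v c else 0 := by
    rw [sum_comm]
    simp only [hI, sum_mul, ite_mul, zero_mul, ite_sum_zero, ite_and]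
  rw [sum_congr rfl fun b _ => sum_add_distrib, sum_add_distrib, ← hleft, ← hright,
    ← sum_add_distrib]
  simp only [hI, Pi.add_apply, Pi.mul_apply, ite_add_zero]

theorem hI_add_s6 (u v : T → ℝ) : hI (u + v) = hI u + hI v := by
  ext a
  simp only [hI, Pi.add_apply, ite_add_zero, sum_add_distrib]

theorem hI_mono : Monotone (hI : (T → ℝ) → T → ℝ) := fun _ _ huv _ =>
  sum_le_sum fun b _ => by split_ifs <;> [exact huv b; rfl]

theorem isHardyType_hI (hT : IsTreeOrder T) : IsHardyType (hI : (T → ℝ) → T → ℝ) where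
  map_add := hI_add_s6
  mono := hI_mono
  mul_le u v hu hv a := by
    simp only [Pi.mul_apply, hI_mul_hI_s6, hI_mul_hI_add_hI_mul]
    refine sum_le_sum fun b _ => sum_le_sum fun c _ => ?_
    have huv : 0 ≤ u b * v c := mul_nonneg (hu b) (hv c)
    have hite : ∀ p : Prop, [Decidable p] → 0 ≤ if p then u b * v c else 0 :=
      fun _ _ => ite_nonneg huv le_rfl
    by_cases hab : a ≤ b ∧ a ≤ c
    · rw [if_pos hab]
      rcases hT a b c hab.1 hab.2 with hbc | hcb
      · rw [if_pos (And.intro hab.1 hbc)]; exact le_add_of_nonneg_right (hite _)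
      · rw [if_pos (And.intro hab.2 hcb)]; exact le_add_of_nonneg_left (hite _)
    · rw [if_neg hab]; exact add_nonneg (hite _) (hite _)

end Tree

section TriTree

variable {T1 T2 T3 : Type*}

theorem isHardyType_k1 [Fintype T1] [PartialOrder T1] (hT : IsTreeOrder T1) :
    IsHardyType (k1 : (T1 × T2 × T3 → ℝ) → T1 × T2 × T3 → ℝ) where
  map_add u v := funext fun a => congrFun (hI_add_s6 (fun t => u (t, a.2)) (fun t => v (t, a.2))) a.1
  mono _ _ huv a := hI_mono (fun t => huv (t, a.2)) a.1
  mul_le u v hu hv a := (isHardyType_hI hT).mul_le (fun t => u (t, a.2)) (fun t => v (t, a.2))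
    (fun t => hu (t, a.2)) (fun t => hv (t, a.2)) a.1

theorem isHardyType_k2 [Fintype T2] [PartialOrder T2] (hT : IsTreeOrder T2) :
    IsHardyType (k2 : (T1 × T2 × T3 → ℝ) → T1 × T2 × T3 → ℝ) where
  map_add u v := funext fun a =>
    congrFun (hI_add_s6 (fun t => u (a.1, t, a.2.2)) (fun t => v (a.1, t, a.2.2))) a.2.1
  mono _ _ huv a := hI_mono (fun t => huv (a.1, t, a.2.2)) a.2.1
  mul_le u v hu hv a := (isHardyType_hI hT).mul_le (fun t => u (a.1, t, a.2.2))
    (fun t => v (a.1, t, a.2.2)) (fun t => hu (a.1, t, a.2.2)) (fun t => hv (a.1, t, a.2.2)) a.2.1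

theorem isHardyType_k3 [Fintype T3] [PartialOrder T3] (hT : IsTreeOrder T3) :
    IsHardyType (k3 : (T1 × T2 × T3 → ℝ) → T1 × T2 × T3 → ℝ) where
  map_add u v := funext fun a =>
    congrFun (hI_add_s6 (fun t => u (a.1, a.2.1, t)) (fun t => v (a.1, a.2.1, t))) a.2.2
  mono _ _ huv a := hI_mono (fun t => huv (a.1, a.2.1, t)) a.2.2
  mul_le u v hu hv a := (isHardyType_hI hT).mul_le (fun t => u (a.1, a.2.1, t))
    (fun t => v (a.1, a.2.1, t)) (fun t => hu (a.1, a.2.1, t)) (fun t => hv (a.1, a.2.1, t)) a.2.2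

theorem commute_k1_k2 [Fintype T1] [PartialOrder T1] [Fintype T2] [PartialOrder T2] :
    Function.Commute (k1 : (T1 × T2 × T3 → ℝ) → _) k2 := fun u => by
  ext a
  simp only [k1, k2, ite_sum_zero]
  rw [sum_comm]
  simp only [← ite_and, and_comm]

theorem commute_k1_k3 [Fintype T1] [PartialOrder T1] [Fintype T3] [PartialOrder T3] :
    Function.Commute (k1 : (T1 × T2 × T3 → ℝ) → _) k3 := fun u => by
  ext a
  simp only [k1, k3, ite_sum_zero]
  rw [sum_comm]
  simp only [← ite_and, and_comm]

theorem commute_k2_k3 [Fintype T2] [PartialOrder T2] [Fintype T3] [PartialOrder T3] :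
    Function.Commute (k2 : (T1 × T2 × T3 → ℝ) → _) k3 := fun u => by
  ext a
  simp only [k2, k3, ite_sum_zero]
  rw [sum_comm]
  simp only [← ite_and, and_comm]

theorem hI_eq_k1_k2_k3 [Fintype T1] [PartialOrder T1] [Fintype T2] [PartialOrder T2]
    [Fintype T3] [PartialOrder T3] (u : T1 × T2 × T3 → ℝ) : hI u = k1 (k2 (k3 u)) := by
  ext a
  simp only [hI, k1, k2, k3, Fintype.sum_prod_type, Prod.le_def, ite_and, ite_sum_zero]

end TriTree

theorem stmt6 {T1 T2 T3 : Type*} [Fintype T1] [PartialOrder T1] [Fintype T2] [PartialOrder T2]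
    [Fintype T3] [PartialOrder T3]
    (h1 : IsTreeOrder T1) (h2 : IsTreeOrder T2) (h3 : IsTreeOrder T3)
    (f g : T1 × T2 × T3 → ℝ) (hf : ∀ a, 0 ≤ f a) (hg : ∀ a, 0 ≤ g a)
    (α : T1 × T2 × T3) :
    hI f α * hI g α ≤
      hI (fun a =>
        f a * hI g a
        + k1 f a * k2 (k3 g) a + k2 f a * k1 (k3 g) a + k3 f a * k1 (k2 g) a
        + k1 (k2 f) a * k3 g a + k1 (k3 f) a * k2 g a + k2 (k3 f) a * k1 g a
        + hI f a * g a) α := by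
  simp only [hI_eq_k1_k2_k3]
  exact (isHardyType_k1 h1).mul_le_comp₃ (isHardyType_k2 h2) (isHardyType_k3 h3)
    commute_k1_k2 commute_k1_k3 commute_k2_k3 hf hg α
end

section
/- Let $T$ be a finite tree and $g, h : T \to [0,\infty)$ with $g$ superadditive. Let $\lambda = \sup_{\alpha \in \operatorname{supp} g} Ih(\alpha)$ (sup over the support of $g$ of $Ih$). Then for every $\beta \in T$, $\sum_{\alpha \leq \beta} g(\alpha) h(\alpha) \leq \lambda\, g(\beta)$. -/
open Finset
open scoped Classical

/-
Write `S β = ∑_{α ≤ β} g α h α`. In a tree every `α < β` lies below exactly one child of `β`, so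
`S β = g β h β + ∑_{b ∈ ch β} S b`, and for a child `b` of `β` one has `Ih b = h b + Ih β`.
Induction on `β` then gives the sharper bound `S β ≤ (λ - Ih β + h β) g β`: the children contribute
at most `(λ - Ih β) ∑_{b ∈ ch β} g b`, which superadditivity bounds by `(λ - Ih β) g β` because
`Ih β ≤ λ` as soon as `g β ≠ 0` (and all `g b` vanish otherwise). Finally `h β ≤ Ih β`.
-/

section TreeOrder

variable {T : Type*} [PartialOrder T]

theorem IsChild.eq_of_le (htree : IsTreeOrder T) {α b b' β : T} (hb : IsChild b β)
    (hb' : IsChild b' β) (hαb : α ≤ b) (hαb' : α ≤ b') : b = b' := by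
  rcases htree α b b' hαb hαb' with hle | hle
  · exact hle.eq_of_not_lt fun hlt => hb.2 b' hlt hb'.1
  · exact (hle.eq_of_not_lt fun hlt => hb'.2 b hlt hb.1).symm

theorem exists_isChild_le_of_lt [Finite T] {α β : T} (h : α < β) : ∃ b, α ≤ b ∧ IsChild b β :=
  exists_le_covBy_of_lt h

theorem IsChild.le_of_lt (htree : IsTreeOrder T) {b β γ : T} (hb : IsChild b β) (hγ : b < γ) :
    β ≤ γ := by
  rcases htree b γ β hγ.le hb.1.le with hγβ | hβγ
  · exact (hγβ.lt_or_eq.resolve_left (hb.2 γ hγ)).ge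
  · exact hβγ

end TreeOrder

section HardyOperators

variable {T : Type*} [Fintype T] [PartialOrder T]

theorem hIstar_eq_add_sum_isChild (htree : IsTreeOrder T) (f : T → ℝ) (β : T) :
    hIstar f β = f β + ∑ b, if IsChild b β then hIstar f b else 0 := by
  have hbelow : ∀ a,
      (∑ b, if IsChild b β ∧ a ≤ b then f a else 0) = if a < β then f a else 0 := by
    intro a
    by_cases ha : a < β
    · obtain ⟨b, hab, hb⟩ := exists_isChild_le_of_lt ha
      rw [if_pos ha, Finset.sum_eq_single b (fun b' _ hb' => if_neg fun h' =>
          hb' (h'.1.eq_of_le htree hb h'.2 hab)) (by simp), if_pos ⟨hb, hab⟩]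
    · exact (Finset.sum_eq_zero fun b _ => if_neg fun h' => ha (h'.2.trans_lt h'.1.1)).trans
        (if_neg ha).symm
  have hsplit : ∀ a, (if a ≤ β then f a else 0) =
      (if a = β then f a else 0) + if a < β then f a else 0 := by
    intro a
    by_cases haβ : a = β
    · simp [haβ]
    · simp [haβ, lt_iff_le_and_ne]
  calc hIstar f β = f β + ∑ a, if a < β then f a else 0 := by
        simp_rw [hIstar, hsplit, Finset.sum_add_distrib, Finset.sum_ite_eq', Finset.mem_univ,
          if_true]
    _ = f β + ∑ b, ∑ a, if IsChild b β ∧ a ≤ b then f a else 0 := by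
        simp_rw [← hbelow]
        rw [Finset.sum_comm]
    _ = f β + ∑ b, if IsChild b β then hIstar f b else 0 := by
        congr 1
        refine Finset.sum_congr rfl fun b _ => ?_
        by_cases hb : IsChild b β <;> simp [hb, hIstar]

theorem hI_eq_add_of_isChild (htree : IsTreeOrder T) (f : T → ℝ) {b β : T} (hb : IsChild b β) :
    hI f b = f b + hI f β := by
  have hsplit : ∀ γ, (if b ≤ γ then f γ else 0) =
      (if γ = b then f γ else 0) + if β ≤ γ then f γ else 0 := by
    intro γ
    by_cases hγb : γ = b
    · subst hγb
      simp [hb.1.not_ge]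
    · by_cases hbγ : b ≤ γ
      · simp [hbγ, hγb, hb.le_of_lt htree (hbγ.lt_of_ne' hγb)]
      · have hβγ : ¬β ≤ γ := fun hβγ => hbγ (hb.1.le.trans hβγ)
        simp [hbγ, hγb, hβγ]
  simp_rw [hI, hsplit, Finset.sum_add_distrib, Finset.sum_ite_eq', Finset.mem_univ, if_true]

theorem le_hI_self {f : T → ℝ} (hf : ∀ a, 0 ≤ f a) (β : T) : f β ≤ hI f β := by
  simpa [hI] using Finset.single_le_sum (f := fun γ => if β ≤ γ then f γ else 0)
    (fun γ _ => by split_ifs <;> simp [hf]) (Finset.mem_univ β)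

theorem hIstar_mul_le_of_superadd (htree : IsTreeOrder T) {g h : T → ℝ} (hg0 : ∀ a, 0 ≤ g a)
    (hsup : Superadd g) {lam : ℝ} (hlam : ∀ a, g a ≠ 0 → hI h a ≤ lam) (β : T) :
    hIstar (fun a => g a * h a) β ≤ (lam - hI h β + h β) * g β := by
  induction β using WellFoundedLT.induction with
  | _ β ih =>
  set C := ∑ b, if IsChild b β then g b else 0
  have hC0 : 0 ≤ C := Finset.sum_nonneg fun b _ => by split_ifs <;> simp [hg0]
  have hchildren : (∑ b, if IsChild b β then hIstar (fun a => g a * h a) b else 0) ≤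
      (lam - hI h β) * C := by
    rw [Finset.mul_sum]
    refine Finset.sum_le_sum fun b _ => ?_
    by_cases hb : IsChild b β
    · have hIb : lam - hI h b + h b = lam - hI h β := by
        rw [hI_eq_add_of_isChild htree h hb]; ring
      simpa [hb, hIb] using ih b hb.1
    · simp [hb]
  have hC : (lam - hI h β) * C ≤ (lam - hI h β) * g β := by
    by_cases hgβ : g β = 0
    · simp [le_antisymm (hgβ ▸ hsup β) hC0, hgβ]
    · exact mul_le_mul_of_nonneg_left (hsup β) (sub_nonneg.2 (hlam β hgβ))
  rw [hIstar_eq_add_sum_isChild htree]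
  linarith

end HardyOperators

theorem stmt8_general {T : Type*} [Fintype T] [PartialOrder T] (htree : IsTreeOrder T)
    (g h : T → ℝ) (hg0 : ∀ a, 0 ≤ g a) (hh0 : ∀ a, 0 ≤ h a)
    (hsup : Superadd g) (lam : ℝ)
    (hlam : ∀ a, g a ≠ 0 → hI h a ≤ lam) (β : T) :
    (∑ a, if a ≤ β then g a * h a else 0) ≤ lam * g β :=
  calc hIstar (fun a => g a * h a) β ≤ (lam - hI h β + h β) * g β :=
        hIstar_mul_le_of_superadd htree hg0 hsup hlam β
    _ ≤ lam * g β := by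
        have := le_hI_self hh0 β
        exact mul_le_mul_of_nonneg_right (by linarith) (hg0 β)

theorem stmt8 {T : Type*} [Fintype T] [PartialOrder T] (htree : IsTreeOrder T)
    (g h : T → ℝ) (hg0 : ∀ a, 0 ≤ g a) (hh0 : ∀ a, 0 ≤ h a)
    (hsup : Superadd g) (lam : ℝ) (hlam0 : 0 ≤ lam)
    (hlam : ∀ a, g a ≠ 0 → hI h a ≤ lam) (β : T) :
    (∑ a, if a ≤ β then g a * h a else 0) ≤ lam * g β :=
  stmt8_general htree g h hg0 hh0 hsup lam hlam β
end

section
/- Let $X, Y$ be finite sets and $K : X \times Y \to [0,\infty)$ a nonnegative kernel defining the operator $Kh(x) = \sum_y K(x,y) h(y)$ and adjoint $K^* u(y) = \sum_x K(x,y) u(x)$. Then for any nonnegative functions $f : Y \to [0,\infty)$ and $g : X \to [0,\infty)$, $\sum_x (Kf)(x)^2\, g(x) \leq \Big( \sup_{x \in \operatorname{supp} g} (K K^* g)(x) \Big) \sum_y f(y)^2$. -/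
/-!
Write `v = K f` and `A = ∑ₓ v² g`. Moving `K` across the pairing gives `A = ⟨f, K*(g v)⟩`, so
Cauchy–Schwarz yields `A² ≤ ‖f‖² ‖K*(g v)‖²`. Cauchy–Schwarz with the weights `K(x, y) g(x)`
bounds `(K*(g v))(y)²` by `(K*g)(y) · K*(g v²)(y)`; moving `K` back, `‖K*(g v)‖² ≤ ∑ₓ g v² · KK*g`,
which is at most `S A` with `S` the supremum of `KK*g` over `supp g`. Hence `A² ≤ S ‖f‖² A`.
-/

open Finset

lemma le_of_sq_le_mul_self {a c : ℝ} (hc : 0 ≤ c) (h : a ^ 2 ≤ c * a) : a ≤ c := by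
  nlinarith

section Kernel

variable {X Y : Type*} [Fintype X] {K : X → Y → ℝ}

lemma sq_adjoint_mul_le (hK : ∀ x y, 0 ≤ K x y) {g : X → ℝ} (hg : ∀ x, 0 ≤ g x)
    (v : X → ℝ) (y : Y) :
    (∑ x, K x y * (g x * v x)) ^ 2 ≤ (∑ x, K x y * g x) * ∑ x, K x y * (g x * v x ^ 2) :=
  sum_sq_le_sum_mul_sum_of_sq_le_mul univ (fun x _ => mul_nonneg (hK x y) (hg x))
    (fun x _ => mul_nonneg (hK x y) (mul_nonneg (hg x) (sq_nonneg _)))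
    (fun x _ => le_of_eq (by ring))

variable [Fintype Y]

lemma sum_mul_kernel_eq_sum_mul_adjoint (u : X → ℝ) (f : Y → ℝ) :
    ∑ x, u x * ∑ y, K x y * f y = ∑ y, f y * ∑ x, K x y * u x := by
  simp_rw [mul_sum]
  rw [sum_comm]
  exact sum_congr rfl fun y _ => sum_congr rfl fun x _ => by ring

lemma sum_sq_adjoint_mul_le (hK : ∀ x y, 0 ≤ K x y) {g : X → ℝ} (hg : ∀ x, 0 ≤ g x)
    (v : X → ℝ) :
    ∑ y, (∑ x, K x y * (g x * v x)) ^ 2 ≤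
      ∑ x, g x * v x ^ 2 * ∑ y, K x y * ∑ x', K x' y * g x' :=
  calc ∑ y, (∑ x, K x y * (g x * v x)) ^ 2
      ≤ ∑ y, (∑ x, K x y * g x) * ∑ x, K x y * (g x * v x ^ 2) :=
        sum_le_sum fun y _ => sq_adjoint_mul_le hK hg v y
    _ = _ := (sum_mul_kernel_eq_sum_mul_adjoint _ _).symm

end Kernel

lemma sum_mul_le_iSup_support_mul {X : Type*} [Fintype X] {g c : X → ℝ}
    (hg : ∀ x, 0 ≤ g x) (hc : ∀ x, 0 ≤ c x) (w : X → ℝ) :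
    ∑ x, g x * c x * w x ≤ (⨆ x : {x : X // g x ≠ 0}, w x) * ∑ x, g x * c x := by
  rw [mul_sum]
  refine sum_le_sum fun x _ => ?_
  by_cases hx : g x = 0
  · simp [hx]
  · rw [mul_comm _ (g x * c x)]
    exact mul_le_mul_of_nonneg_left
      (le_ciSup (f := fun x : {x : X // g x ≠ 0} => w x) (Set.finite_range _).bddAbove ⟨x, hx⟩)
      (mul_nonneg (hg x) (hc x))

theorem stmt9_general {X Y : Type*} [Fintype X] [Fintype Y] (K : X → Y → ℝ)
    (hK : ∀ x y, 0 ≤ K x y) (f : Y → ℝ) (g : X → ℝ)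
    (hg : ∀ x, 0 ≤ g x) :
    ∑ x, (∑ y, K x y * f y) ^ 2 * g x ≤
      (⨆ x : {x : X // g x ≠ 0}, ∑ y, K x.1 y * ∑ x', K x' y * g x') * ∑ y, f y ^ 2 := by
  set v : X → ℝ := fun x => ∑ y, K x y * f y
  set S := ⨆ x : {x : X // g x ≠ 0}, ∑ y, K x.1 y * ∑ x', K x' y * g x'
  have hS : 0 ≤ S := Real.iSup_nonneg fun x => sum_nonneg fun y _ =>
    mul_nonneg (hK x.1 y) (sum_nonneg fun x' _ => mul_nonneg (hK x' y) (hg x'))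
  have hA : ∑ x, v x ^ 2 * g x = ∑ y, f y * ∑ x, K x y * (g x * v x) := by
    rw [← sum_mul_kernel_eq_sum_mul_adjoint]
    exact sum_congr rfl fun x _ => by ring
  have hSA : ∑ y, (∑ x, K x y * (g x * v x)) ^ 2 ≤ S * ∑ x, v x ^ 2 * g x := by
    refine (sum_sq_adjoint_mul_le hK hg v).trans ?_
    simpa only [mul_comm (g _)] using sum_mul_le_iSup_support_mul hg (fun x => sq_nonneg (v x))
      fun x => ∑ y, K x y * ∑ x', K x' y * g x'
  refine le_of_sq_le_mul_self (mul_nonneg hS (sum_nonneg fun y _ => sq_nonneg (f y))) ?_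
  calc (∑ x, v x ^ 2 * g x) ^ 2
      = (∑ y, f y * ∑ x, K x y * (g x * v x)) ^ 2 := by rw [hA]
    _ ≤ (∑ y, f y ^ 2) * ∑ y, (∑ x, K x y * (g x * v x)) ^ 2 := sum_mul_sq_le_sq_mul_sq _ _ _
    _ ≤ (∑ y, f y ^ 2) * (S * ∑ x, v x ^ 2 * g x) := by gcongr
    _ = S * (∑ y, f y ^ 2) * ∑ x, v x ^ 2 * g x := by ring

theorem stmt9 {X Y : Type*} [Fintype X] [Fintype Y] (K : X → Y → ℝ)
    (hK : ∀ x y, 0 ≤ K x y) (f : Y → ℝ) (g : X → ℝ)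
    (hf : ∀ y, 0 ≤ f y) (hg : ∀ x, 0 ≤ g x) :
    ∑ x, (∑ y, K x y * f y) ^ 2 * g x ≤
      (⨆ x : {x : X // g x ≠ 0}, ∑ y, K x.1 y * ∑ x', K x' y * g x') * ∑ y, f y ^ 2 :=
  stmt9_general K hK f g hg
end

section
/- Let $T^3$ be a tri-tree with tensor-product weight $w = w_1 \otimes w_2 \otimes w_3 \geq 0$, and let $f : T^3 \to [0,\infty)$ be superadditive in each parameter separately with $\operatorname{supp} f \subseteq \{ \mathbf{I}(wf) \leq \delta \}$. Then for every $\lambda > 0$, $\sum_{T^3} w\, \big( I_1(w_1 f) \cdot I_2 I_3(w_2 w_3 f) \big)^2 \, \mathbf{1}_{\{\mathbf{I}(wf) \leq \lambda\}} \leq 2\, \delta \lambda \sum_{T^3} w f^2$. -/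
open Finset
open scoped Classical

/-!
Fix the second and third coordinates. Then `B = I₂I₃(w₂w₃f)` is a nonnegative, superadditive
function on the first tree, `I(wf) = I₁(w₁B)`, and the claim reduces to a one-tree inequality.
On a tree, `(I g)² ≤ 2 I(g · I g)` because the up-set of a point is a chain. After swapping sums
with the adjoint `I*`, one needs bounds `I*(w φ B) ≤ μ φ` for superadditive `φ` supported where
`I(wB) ≤ μ`; these follow by induction from the leaves, since superadditivity lets the children's
contributions be absorbed by the parent. They are used with `φ = B · 1{I(wB) ≤ λ}`, `μ = λ`, and
with `φ = f`, `μ = δ`.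
-/

section Tree

variable {T : Type*} [PartialOrder T]

lemma IsChild.eq_of_le_s13 (h : IsTreeOrder T) {b c c' γ : T} (hc : IsChild c γ)
    (hc' : IsChild c' γ) (hb : b ≤ c) (hb' : b ≤ c') : c = c' := by
  rcases h b c c' hb hb' with hle | hle
  · exact hle.eq_or_lt.resolve_right fun hlt => hc.2 c' hlt hc'.1
  · exact (hle.eq_or_lt.resolve_right fun hlt => hc'.2 c hlt hc.1).symm

lemma IsChild.le_iff (h : IsTreeOrder T) {c γ : T} (hc : IsChild c γ) (b : T) :
    c ≤ b ↔ b = c ∨ γ ≤ b := by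
  refine ⟨fun hcb => ?_, ?_⟩
  · rcases hcb.eq_or_lt with rfl | hlt
    · exact .inl rfl
    · rcases h c b γ hlt.le hc.1.le with hbγ | hγb
      · exact .inr (hbγ.eq_or_lt.resolve_right (hc.2 b hlt)).ge
      · exact .inr hγb
  · rintro (rfl | hγb)
    exacts [le_rfl, hc.1.le.trans hγb]

variable [Fintype T]

lemma exists_child_of_lt {b γ : T} (hb : b < γ) : ∃ c, IsChild c γ ∧ b ≤ c := by
  obtain ⟨c, hbc, hc_mem, hc_max⟩ :=
    (univ.filter (· < γ)).exists_le_maximal (a := b) (by simpa using hb)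
  simp only [mem_filter, mem_univ, true_and] at hc_mem hc_max
  exact ⟨c, ⟨hc_mem, fun d hcd hdγ => hcd.not_ge (hc_max hdγ hcd.le)⟩, hbc⟩

lemma hI_eq_sum_filter (g : T → ℝ) (a : T) : hI g a = ∑ b with a ≤ b, g b :=
  (sum_filter _ _).symm

lemma hIstar_eq_sum_filter (g : T → ℝ) (b : T) : hIstar g b = ∑ a with a ≤ b, g a :=
  (sum_filter _ _).symm

lemma hI_nonneg_s13 {g : T → ℝ} (hg : ∀ x, 0 ≤ g x) (a : T) : 0 ≤ hI g a :=
  sum_nonneg fun b _ => ite_nonneg (hg b) le_rfl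

lemma le_hI_self_s13 {g : T → ℝ} (hg : ∀ x, 0 ≤ g x) (a : T) : g a ≤ hI g a := by
  rw [hI_eq_sum_filter]
  exact single_le_sum (fun b _ => hg b) (by simp)

lemma hI_const_mul (c : ℝ) (g : T → ℝ) (a : T) : hI (fun b => c * g b) a = c * hI g a := by
  simp only [hI, mul_sum, mul_ite, mul_zero]

lemma sum_mul_hI (u v : T → ℝ) : ∑ x, u x * hI v x = ∑ b, v b * hIstar u b := by
  simp only [hI, hIstar, mul_sum, mul_ite, mul_zero]
  rw [sum_comm]
  exact sum_congr rfl fun b _ => sum_congr rfl fun a _ => by rw [mul_comm]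

lemma hI_prod {S : Type*} [Fintype S] [PartialOrder S] (g : T × S → ℝ) (a : T × S) :
    hI g a = hI (fun b => hI (fun c => g (b, c)) a.2) a.1 := by
  simp only [hI, Fintype.sum_prod_type, Prod.le_def, ite_and, ite_sum_zero]

lemma hI_child (h : IsTreeOrder T) {c γ : T} (hc : IsChild c γ) (t : T → ℝ) :
    hI t c = t c + hI t γ := by
  have hup : univ.filter (c ≤ ·) = insert c (univ.filter (γ ≤ ·)) := by
    ext b
    simp [hc.le_iff h, eq_comm]
  rw [hI_eq_sum_filter, hI_eq_sum_filter, hup, sum_insert (by simpa using hc.1.not_ge)]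

lemma hIstar_eq_add_sum_children (h : IsTreeOrder T) (t : T → ℝ) (γ : T) :
    hIstar t γ = t γ + ∑ c, if IsChild c γ then hIstar t c else 0 := by
  have hdown : univ.filter (· ≤ γ) =
      insert γ ((univ.filter (IsChild · γ)).biUnion fun c => univ.filter (· ≤ c)) := by
    ext b
    simp only [mem_filter, mem_univ, true_and, mem_insert, mem_biUnion]
    refine ⟨fun hb => ?_, ?_⟩
    · rcases hb.eq_or_lt with rfl | hlt
      exacts [.inl rfl, .inr ((exists_child_of_lt hlt).imp fun c hc => hc)]
    · rintro (rfl | ⟨c, hc, hbc⟩)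
      exacts [le_rfl, hbc.trans hc.1.le]
  have hdisj : ((univ.filter (IsChild · γ) : Finset T) : Set T).PairwiseDisjoint
      fun c => univ.filter (· ≤ c) := by
    intro c hc c' hc' hne
    simp only [mem_coe, mem_filter, mem_univ, true_and] at hc hc'
    exact disjoint_left.2 fun b hb hb' =>
      hne (hc.eq_of_le_s13 h hc' (mem_filter.1 hb).2 (mem_filter.1 hb').2)
  rw [hIstar_eq_sum_filter, hdown, sum_insert, sum_biUnion hdisj, sum_filter]
  · simp only [hIstar_eq_sum_filter]
  · simp only [mem_biUnion, mem_filter, mem_univ, true_and, not_exists, not_and]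
    exact fun c hc hγc => (hγc.trans_lt hc.1).false

lemma Superadd.const_mul {g : T → ℝ} (hg : Superadd g) {c : ℝ} (hc : 0 ≤ c) :
    Superadd fun x => c * g x := by
  intro β
  simpa only [mul_sum, mul_ite, mul_zero] using mul_le_mul_of_nonneg_left (hg β) hc

lemma Superadd.hI {S : Type*} [Fintype S] [PartialOrder S] {G : S → T → ℝ}
    (hG : ∀ b, Superadd (G b)) (a : S) : Superadd fun x => hI (fun b => G b x) a := by
  intro β
  simp only [_root_.hI, ite_sum_zero]
  rw [sum_comm]
  refine sum_le_sum fun b _ => ?_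
  by_cases hab : a ≤ b
  · simpa only [if_pos hab] using hG b β
  · simp only [if_neg hab, ite_self, sum_const_zero, le_refl]

-- `I(wB)` grows when passing to a child, so the region `I(wB) ≤ λ` is closed upwards.
lemma superadd_ite_hI_le (h : IsTreeOrder T) {w B : T → ℝ} (hw : ∀ x, 0 ≤ w x)
    (hB : ∀ x, 0 ≤ B x) (hsB : Superadd B) (lam : ℝ) :
    Superadd fun x => if hI (fun b => w b * B b) x ≤ lam then B x else 0 := by
  intro β
  dsimp only
  by_cases hβ : hI (fun b => w b * B b) β ≤ lam
  · rw [if_pos hβ]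
    refine (sum_le_sum fun b _ => ?_).trans (hsB β)
    split_ifs <;> simp [hB]
  · rw [if_neg hβ]
    refine le_of_eq (sum_eq_zero fun b _ => ?_)
    split_ifs with hb hb_le
    · have := hI_child h hb (fun b => w b * B b)
      nlinarith [mul_nonneg (hw b) (hB b)]
    all_goals rfl

-- `μ - I(wB)(γ) + w γ B γ` is `μ` minus the `wB`-mass strictly above `γ`; at a child of `γ` it
-- equals `μ - I(wB)(γ)`, which is what lets the induction from the leaves close.
lemma hIstar_le_sub_hI_mul (h : IsTreeOrder T) {w B φ : T → ℝ} (hφ : ∀ x, 0 ≤ φ x)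
    (hsa : Superadd φ) {μ : ℝ} (hs : ∀ β, φ β ≠ 0 → hI (fun b => w b * B b) β ≤ μ) (γ : T) :
    hIstar (fun β => w β * φ β * B β) γ
      ≤ (μ - hI (fun b => w b * B b) γ + w γ * B γ) * φ γ := by
  induction γ using WellFoundedLT.induction with
  | _ γ ih =>
  set F := hI (fun b => w b * B b)
  have hchild : ∀ c, (if IsChild c γ then hIstar (fun β => w β * φ β * B β) c else 0)
      ≤ (μ - F γ) * if IsChild c γ then φ c else 0 := by
    intro c
    split_ifs with hc
    · convert ih c hc.1 using 2
      rw [show F c = _ from hI_child h hc _]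
      ring
    · simp
  have hS : (μ - F γ) * ∑ c, (if IsChild c γ then φ c else 0) ≤ (μ - F γ) * φ γ := by
    by_cases hφγ : φ γ = 0
    · have : ∑ c, (if IsChild c γ then φ c else 0) = 0 :=
        le_antisymm (hφγ ▸ hsa γ) (sum_nonneg fun c _ => ite_nonneg (hφ c) le_rfl)
      rw [this, hφγ]
    · exact mul_le_mul_of_nonneg_left (hsa γ) (sub_nonneg.2 (hs γ hφγ))
  have hsum := sum_le_sum fun c (_ : c ∈ univ) => hchild c
  rw [← mul_sum] at hsum
  rw [hIstar_eq_add_sum_children h]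
  linarith

lemma hIstar_le_of_superadd (h : IsTreeOrder T) {w B φ : T → ℝ} (hw : ∀ x, 0 ≤ w x)
    (hB : ∀ x, 0 ≤ B x) (hφ : ∀ x, 0 ≤ φ x) (hsa : Superadd φ) {μ : ℝ}
    (hs : ∀ β, φ β ≠ 0 → hI (fun b => w b * B b) β ≤ μ) (γ : T) :
    hIstar (fun β => w β * φ β * B β) γ ≤ μ * φ γ := by
  refine (hIstar_le_sub_hI_mul h hφ hsa hs γ).trans (mul_le_mul_of_nonneg_right ?_ (hφ γ))
  linarith [le_hI_self_s13 (fun b => mul_nonneg (hw b) (hB b)) γ]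

lemma hI_sq_le (h : IsTreeOrder T) {g : T → ℝ} (hg : ∀ x, 0 ≤ g x) (a : T) :
    hI g a ^ 2 ≤ 2 * hI (fun b => g b * hI g b) a := by
  have hpair : ∀ b c, (if a ≤ b then g b else 0) * (if a ≤ c then g c else 0) ≤
      (if a ≤ b ∧ b ≤ c then g b * g c else 0) + (if a ≤ c ∧ c ≤ b then g c * g b else 0) := by
    intro b c
    have := mul_nonneg (hg b) (hg c)
    by_cases hb : a ≤ b <;> by_cases hc : a ≤ c
    · rcases h a b c hb hc with hle | hle <;> split_ifs <;>
        first | linarith [mul_comm (g b) (g c)] | tauto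
    all_goals split_ifs <;> linarith [mul_comm (g b) (g c)]
  calc hI g a ^ 2 = ∑ b, ∑ c, (if a ≤ b then g b else 0) * (if a ≤ c then g c else 0) := by
        rw [hI, sq, sum_mul_sum]
    _ ≤ ∑ b, ∑ c, ((if a ≤ b ∧ b ≤ c then g b * g c else 0)
          + (if a ≤ c ∧ c ≤ b then g c * g b else 0)) := by
        gcongr with b _ c _
        exact hpair b c
    _ = 2 * ∑ b, ∑ c, if a ≤ b ∧ b ≤ c then g b * g c else 0 := by
        simp only [sum_add_distrib]
        rw [sum_comm (f := fun b c => if a ≤ c ∧ c ≤ b then g c * g b else 0)]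
        ring
    _ = 2 * hI (fun b => g b * hI g b) a := by
        simp only [hI, ite_and, mul_sum, mul_ite, mul_zero, ite_sum_zero]

lemma sum_sq_hI_mul_indicator_le (h : IsTreeOrder T) {w f B : T → ℝ} (hw : ∀ x, 0 ≤ w x)
    (hf : ∀ x, 0 ≤ f x) (hB : ∀ x, 0 ≤ B x) (hsf : Superadd f) (hsB : Superadd B) {δ lam : ℝ}
    (hsupp : ∀ β, f β ≠ 0 → hI (fun b => w b * B b) β ≤ δ) (hlam : 0 ≤ lam) :
    ∑ x, w x * (hI (fun b => w b * f b) x * B x) ^ 2 *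
        (if hI (fun b => w b * B b) x ≤ lam then 1 else 0)
      ≤ 2 * δ * lam * ∑ x, w x * f x ^ 2 := by
  set A := hI (fun b => w b * f b)
  set F := hI (fun b => w b * B b)
  set φ := fun x => if F x ≤ lam then B x else 0 with hφ_def
  have hφ_nonneg : ∀ x, 0 ≤ φ x := fun x => ite_nonneg (hB x) le_rfl
  have hφ_le : ∀ x, φ x ≤ B x := fun x => by
    simp only [hφ_def]
    split_ifs <;> simp [hB]
  have hφ_supp : ∀ β, φ β ≠ 0 → F β ≤ lam := fun β hβ => by
    by_contra hF
    simp [hφ_def, hF] at hβ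
  have hlam_bound : ∀ b, hIstar (fun β => w β * φ β * B β) b ≤ lam * B b := fun b =>
    (hIstar_le_of_superadd h hw hB hφ_nonneg (superadd_ite_hI_le h hw hB hsB lam) hφ_supp b).trans
      (mul_le_mul_of_nonneg_left (hφ_le b) hlam)
  have hδ_bound : ∀ γ, hIstar (fun β => w β * f β * B β) γ ≤ δ * f γ :=
    hIstar_le_of_superadd h hw hB hf hsf hsupp
  have hwφB : ∀ x, 0 ≤ w x * φ x * B x := fun x =>
    mul_nonneg (mul_nonneg (hw x) (hφ_nonneg x)) (hB x)
  have hwfA : ∀ x, 0 ≤ w x * f x * A x := fun x =>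
    mul_nonneg (mul_nonneg (hw x) (hf x)) (hI_nonneg_s13 (fun b => mul_nonneg (hw b) (hf b)) x)
  calc ∑ x, w x * (A x * B x) ^ 2 * (if F x ≤ lam then 1 else 0)
      = ∑ x, w x * φ x * B x * A x ^ 2 := by
        refine sum_congr rfl fun x _ => ?_
        simp only [hφ_def]
        split_ifs <;> ring
    _ ≤ ∑ x, w x * φ x * B x * (2 * hI (fun b => w b * f b * A b) x) := by
        gcongr with x
        · exact hwφB x
        · exact hI_sq_le h (fun b => mul_nonneg (hw b) (hf b)) x
    _ = 2 * ∑ b, w b * f b * A b * hIstar (fun β => w β * φ β * B β) b := by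
        rw [← sum_mul_hI, mul_sum]
        exact sum_congr rfl fun x _ => by ring
    _ ≤ 2 * ∑ b, w b * f b * A b * (lam * B b) := by
        gcongr with b
        · exact hwfA b
        · exact hlam_bound b
    _ = 2 * lam * ∑ γ, w γ * f γ * hIstar (fun β => w β * f β * B β) γ := by
        rw [← sum_mul_hI, mul_sum, mul_sum]
        exact sum_congr rfl fun x _ => by ring
    _ ≤ 2 * lam * ∑ γ, w γ * f γ * (δ * f γ) := by
        gcongr with γ
        · exact mul_nonneg (hw γ) (hf γ)
        · exact hδ_bound γ
    _ = 2 * δ * lam * ∑ x, w x * f x ^ 2 := by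
        rw [mul_sum, mul_sum]
        exact sum_congr rfl fun x _ => by ring

end Tree

theorem stmt13_general {T1 T2 T3 : Type*} [Fintype T1] [PartialOrder T1] [Fintype T2] [PartialOrder T2]
    [Fintype T3] [PartialOrder T3]
    (h1 : IsTreeOrder T1)
    (w1 : T1 → ℝ) (w2 : T2 → ℝ) (w3 : T3 → ℝ)
    (hw1 : ∀ x, 0 ≤ w1 x) (hw2 : ∀ x, 0 ≤ w2 x) (hw3 : ∀ x, 0 ≤ w3 x)
    (f : T1 × T2 × T3 → ℝ) (hf : ∀ a, 0 ≤ f a)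
    (hs1 : SuperaddT1 f) (δ : ℝ)
    (hsupp : ∀ a, f a ≠ 0 → hI (fun x => w1 x.1 * w2 x.2.1 * w3 x.2.2 * f x) a ≤ δ)
    (lam : ℝ) (hlam : 0 < lam) :
    ∑ a, w1 a.1 * w2 a.2.1 * w3 a.2.2 *
        (k1 (fun x => w1 x.1 * f x) a *
          k2 (k3 (fun x => w2 x.2.1 * w3 x.2.2 * f x)) a) ^ 2 *
        (if hI (fun x => w1 x.1 * w2 x.2.1 * w3 x.2.2 * f x) a ≤ lam then 1 else 0)
      ≤ 2 * δ * lam * ∑ a, w1 a.1 * w2 a.2.1 * w3 a.2.2 * f a ^ 2 := by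
  set B := k2 (k3 (fun x => w2 x.2.1 * w3 x.2.2 * f x))
  have hB_eq : ∀ x p, B (x, p) = hI (fun b => hI (fun c => w2 b * w3 c * f (x, b, c)) p.2) p.1 :=
    fun _ _ => rfl
  have hB_nonneg : ∀ x p, 0 ≤ B (x, p) := fun x p => hI_nonneg_s13 (fun b =>
    hI_nonneg_s13 (fun c => mul_nonneg (mul_nonneg (hw2 b) (hw3 c)) (hf _)) _) _
  have hsB : ∀ p, Superadd fun x => B (x, p) := fun p => by
    simp only [hB_eq]
    exact Superadd.hI (fun b => Superadd.hI (fun c =>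
      (show Superadd fun x => f (x, b, c) from fun β => hs1 β b c).const_mul
        (mul_nonneg (hw2 b) (hw3 c))) _) _
  have hF : ∀ x p, hI (fun x => w1 x.1 * w2 x.2.1 * w3 x.2.2 * f x) (x, p)
      = hI (fun b => w1 b * B (b, p)) x := by
    intro x p
    simp only [hI_prod (T := T1), hI_prod (T := T2), hB_eq, ← hI_const_mul, mul_assoc]
  calc ∑ a, w1 a.1 * w2 a.2.1 * w3 a.2.2 * (k1 (fun x => w1 x.1 * f x) a * B a) ^ 2 *
        (if hI (fun x => w1 x.1 * w2 x.2.1 * w3 x.2.2 * f x) a ≤ lam then 1 else 0)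
      = ∑ p : T2 × T3, w2 p.1 * w3 p.2 * ∑ x, w1 x * (hI (fun b => w1 b * f (b, p)) x * B (x, p)) ^ 2 *
          (if hI (fun b => w1 b * B (b, p)) x ≤ lam then 1 else 0) := by
        rw [Fintype.sum_prod_type, sum_comm]
        refine sum_congr rfl fun p _ => ?_
        rw [mul_sum]
        refine sum_congr rfl fun x _ => ?_
        rw [hF]
        simp only [k1, hI]
        ring
    _ ≤ ∑ p : T2 × T3, w2 p.1 * w3 p.2 * (2 * δ * lam * ∑ x, w1 x * f (x, p) ^ 2) := by
        gcongr with p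
        · exact mul_nonneg (hw2 p.1) (hw3 p.2)
        · exact sum_sq_hI_mul_indicator_le h1 hw1 (fun x => hf _) (hB_nonneg · p)
            (fun β => hs1 β p.1 p.2) (hsB p) (fun β hβ => hF β p ▸ hsupp _ hβ) hlam.le
    _ = 2 * δ * lam * ∑ a, w1 a.1 * w2 a.2.1 * w3 a.2.2 * f a ^ 2 := by
        rw [Fintype.sum_prod_type (fun a => w1 a.1 * w2 a.2.1 * w3 a.2.2 * f a ^ 2), sum_comm,
          mul_sum]
        refine sum_congr rfl fun p _ => ?_
        rw [mul_sum, mul_sum, mul_sum]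
        exact sum_congr rfl fun x _ => by ring

theorem stmt13 {T1 T2 T3 : Type*} [Fintype T1] [PartialOrder T1] [Fintype T2] [PartialOrder T2]
    [Fintype T3] [PartialOrder T3]
    (h1 : IsTreeOrder T1) (h2 : IsTreeOrder T2) (h3 : IsTreeOrder T3)
    (w1 : T1 → ℝ) (w2 : T2 → ℝ) (w3 : T3 → ℝ)
    (hw1 : ∀ x, 0 ≤ w1 x) (hw2 : ∀ x, 0 ≤ w2 x) (hw3 : ∀ x, 0 ≤ w3 x)
    (f : T1 × T2 × T3 → ℝ) (hf : ∀ a, 0 ≤ f a)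
    (hs1 : SuperaddT1 f) (hs2 : SuperaddT2 f) (hs3 : SuperaddT3 f) (δ : ℝ)
    (hsupp : ∀ a, f a ≠ 0 → hI (fun x => w1 x.1 * w2 x.2.1 * w3 x.2.2 * f x) a ≤ δ)
    (lam : ℝ) (hlam : 0 < lam) :
    ∑ a, w1 a.1 * w2 a.2.1 * w3 a.2.2 *
        (k1 (fun x => w1 x.1 * f x) a *
          k2 (k3 (fun x => w2 x.2.1 * w3 x.2.2 * f x)) a) ^ 2 *
        (if hI (fun x => w1 x.1 * w2 x.2.1 * w3 x.2.2 * f x) a ≤ lam then 1 else 0)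
      ≤ 2 * δ * lam * ∑ a, w1 a.1 * w2 a.2.1 * w3 a.2.2 * f a ^ 2 :=
  stmt13_general h1 w1 w2 w3 hw1 hw2 hw3 f hf hs1 δ hsupp lam hlam
end
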